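/- arXiv:1302.6120 — 2 statements merged into one kernel-verified Lean document; each statement's English description precedes it below -/
import Mathlib

section
/- The function φ₂(x) = ∫₀^∞ η(t) e^{κ(b-x)t} dt satisfies the ordinary differential equation ρ φ₂(x) - a(b - x) φ₂'(x) - (σ²/2) φ₂''(x) = 0 for all x ∈ ℝ. -/
/-! Write `p = ρ / a - 1` and `M_p(c) = ∫₀^∞ t^p e^{-t²/2} e^{ct} dt`, so that
`φ₂(x) = M_p(κ(b - x))`. Differentiating under the integral sign gives `M_p' = M_{p+1}`, and
integrating `d/dt (t^{p+1} e^{-t²/2 + ct})` over `(0, ∞)` gives the recurrence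
`M_{p+2} = (p + 1) M_p + c M_{p+1}`. Since `ρ = a (p + 1)` and `σ² κ² / 2 = a`, the left-hand
side of the equation is `a` times this recurrence at `c = κ(b - x)`. -/

open MeasureTheory Real Set Filter Topology

noncomputable def tiltedGaussKernel (p c t : ℝ) : ℝ := t ^ p * exp (-t ^ 2 / 2) * exp (c * t)

noncomputable def tiltedGaussMoment (p c : ℝ) : ℝ := ∫ t in Ioi 0, tiltedGaussKernel p c t

section

variable {p c t : ℝ}

lemma tiltedGaussKernel_nonneg (ht : 0 ≤ t) : 0 ≤ tiltedGaussKernel p c t := by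
  unfold tiltedGaussKernel; positivity

lemma continuousOn_tiltedGaussKernel : ContinuousOn (tiltedGaussKernel p c) (Ioi 0) := by
  unfold tiltedGaussKernel
  exact .mul (.mul (continuousOn_id.rpow_const fun t ht => .inl (ne_of_gt ht)) (by fun_prop))
    (by fun_prop)

lemma tiltedGaussKernel_mono_right {c' : ℝ} (hc : c ≤ c') (ht : 0 ≤ t) :
    tiltedGaussKernel p c t ≤ tiltedGaussKernel p c' t := by
  unfold tiltedGaussKernel
  gcongr

-- The tilt is absorbed by half of the Gaussian: `c t ≤ t² / 4 + c²`.
lemma tiltedGaussKernel_le (ht : 0 ≤ t) :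
    tiltedGaussKernel p c t ≤ exp (c ^ 2) * (t ^ p * exp (-(1 / 4) * t ^ 2)) := by
  have hquad : -t ^ 2 / 2 + c * t ≤ c ^ 2 + -(1 / 4) * t ^ 2 := by
    nlinarith [sq_nonneg (t / 2 - c)]
  calc tiltedGaussKernel p c t = t ^ p * exp (-t ^ 2 / 2 + c * t) := by
        rw [tiltedGaussKernel, exp_add, mul_assoc]
    _ ≤ t ^ p * exp (c ^ 2 + -(1 / 4) * t ^ 2) := by gcongr
    _ = exp (c ^ 2) * (t ^ p * exp (-(1 / 4) * t ^ 2)) := by rw [exp_add]; ring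

lemma integrableOn_tiltedGaussKernel (hp : -1 < p) (c : ℝ) :
    IntegrableOn (tiltedGaussKernel p c) (Ioi 0) := by
  refine Integrable.mono'
    ((integrableOn_rpow_mul_exp_neg_mul_sq (b := 1 / 4) (by norm_num) hp).const_mul (exp (c ^ 2)))
    (continuousOn_tiltedGaussKernel.aestronglyMeasurable measurableSet_Ioi) ?_
  filter_upwards [ae_restrict_mem measurableSet_Ioi] with t ht
  rw [norm_of_nonneg (tiltedGaussKernel_nonneg (le_of_lt ht))]
  exact tiltedGaussKernel_le (le_of_lt ht)

lemma tendsto_tiltedGaussKernel_atTop (p c : ℝ) :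
    Tendsto (tiltedGaussKernel p c) atTop (𝓝 0) := by
  have hgauss : Tendsto (fun t : ℝ => exp (c ^ 2) * (|t| ^ p * exp (-(1 / 4) * t ^ 2))) atTop
      (𝓝 0) := by
    simpa using ((tendsto_rpow_abs_mul_exp_neg_mul_sq_cocompact (by norm_num : (0 : ℝ) < 1 / 4)
      p).mono_left atTop_le_cocompact).const_mul (exp (c ^ 2))
  refine squeeze_zero' ?_ ?_ hgauss
  · filter_upwards [eventually_ge_atTop 0] with t ht using tiltedGaussKernel_nonneg ht
  · filter_upwards [eventually_ge_atTop 0] with t ht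
    rw [abs_of_nonneg ht]
    exact tiltedGaussKernel_le ht

lemma hasDerivAt_tiltedGaussKernel_tilt (ht : 0 < t) (x : ℝ) :
    HasDerivAt (fun c => tiltedGaussKernel p c t) (tiltedGaussKernel (p + 1) x t) x := by
  have h := (((hasDerivAt_id x).mul_const t).exp).const_mul (t ^ p * exp (-t ^ 2 / 2))
  refine h.congr_deriv ?_
  rw [tiltedGaussKernel, rpow_add_one (ne_of_gt ht), id]
  ring

lemma hasDerivAt_tiltedGaussMoment (hp : -1 < p) (c : ℝ) :
    HasDerivAt (tiltedGaussMoment p) (tiltedGaussMoment (p + 1) c) c := by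
  unfold tiltedGaussMoment
  refine (hasDerivAt_integral_of_dominated_loc_of_deriv_le
    (F := fun x t => tiltedGaussKernel p x t) (F' := fun x t => tiltedGaussKernel (p + 1) x t)
    (bound := tiltedGaussKernel (p + 1) (|c| + 1)) (Metric.ball_mem_nhds c one_pos)
    (.of_forall fun x => continuousOn_tiltedGaussKernel.aestronglyMeasurable measurableSet_Ioi)
    (integrableOn_tiltedGaussKernel hp c)
    (continuousOn_tiltedGaussKernel.aestronglyMeasurable measurableSet_Ioi) ?_
    (integrableOn_tiltedGaussKernel (by linarith) _) ?_).2
  · filter_upwards [ae_restrict_mem measurableSet_Ioi] with t ht x hx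
    rw [norm_of_nonneg (tiltedGaussKernel_nonneg (le_of_lt ht))]
    refine tiltedGaussKernel_mono_right ?_ (le_of_lt ht)
    have := (abs_sub_lt_iff.mp (Metric.mem_ball.mp hx)).1
    linarith [le_abs_self c]
  · filter_upwards [ae_restrict_mem measurableSet_Ioi] with t ht x _
    exact hasDerivAt_tiltedGaussKernel_tilt ht x

lemma hasDerivAt_tiltedGaussKernel (ht : 0 < t) :
    HasDerivAt (tiltedGaussKernel (p + 1) c)
      ((p + 1) * tiltedGaussKernel p c t + c * tiltedGaussKernel (p + 1) c t
        - tiltedGaussKernel (p + 2) c t) t := by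
  have hpow : HasDerivAt (fun t : ℝ => t ^ (p + 1)) ((p + 1) * t ^ p) t := by
    simpa using hasDerivAt_rpow_const (p := p + 1) (.inl (ne_of_gt ht))
  have hgauss : HasDerivAt (fun t : ℝ => exp (-t ^ 2 / 2)) (exp (-t ^ 2 / 2) * (-t)) t := by
    refine (((hasDerivAt_pow 2 t).neg).div_const 2).exp.congr_deriv ?_
    simp only [Pi.neg_apply]
    ring
  have htilt : HasDerivAt (fun t : ℝ => exp (c * t)) (exp (c * t) * c) t := by
    simpa using ((hasDerivAt_id t).const_mul c).exp
  refine ((hpow.mul hgauss).mul htilt).congr_deriv ?_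
  simp only [tiltedGaussKernel, Pi.mul_apply, show p + 2 = p + 1 + 1 by ring,
    rpow_add_one (ne_of_gt ht)]
  ring

-- Integrate the derivative of `t ↦ t ^ (p + 1) e^{-t²/2 + ct}`, which vanishes at `0` and `∞`.
lemma tiltedGaussMoment_add_two (hp : -1 < p) (c : ℝ) :
    tiltedGaussMoment (p + 2) c =
      (p + 1) * tiltedGaussMoment p c + c * tiltedGaussMoment (p + 1) c := by
  have h0 := integrableOn_tiltedGaussKernel hp c
  have h1 := integrableOn_tiltedGaussKernel (p := p + 1) (by linarith) c
  have h2 := integrableOn_tiltedGaussKernel (p := p + 2) (by linarith) c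
  have hcont : ContinuousWithinAt (tiltedGaussKernel (p + 1) c) (Ici 0) 0 := by
    unfold tiltedGaussKernel
    exact .mul (.mul (continuousAt_rpow_const 0 _ (.inr (by linarith))).continuousWithinAt
      (by fun_prop)) (by fun_prop)
  have hlin : IntegrableOn (fun t => (p + 1) * tiltedGaussKernel p c t
      + c * tiltedGaussKernel (p + 1) c t) (Ioi 0) := (h0.const_mul _).add (h1.const_mul _)
  have hftc := integral_Ioi_of_hasDerivAt_of_tendsto hcont
    (fun t ht => hasDerivAt_tiltedGaussKernel ht)
    (hlin.sub h2) (tendsto_tiltedGaussKernel_atTop (p + 1) c)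
  rw [integral_sub hlin h2,
    integral_add (h0.const_mul _) (h1.const_mul _), integral_const_mul, integral_const_mul] at hftc
  simp only [tiltedGaussKernel, zero_rpow (by linarith : p + 1 ≠ 0), zero_mul] at hftc
  unfold tiltedGaussMoment tiltedGaussKernel
  linarith

lemma hasDerivAt_tiltedGaussMoment_affine (hp : -1 < p) (κ b x : ℝ) :
    HasDerivAt (fun x => tiltedGaussMoment p (κ * (b - x)))
      (-κ * tiltedGaussMoment (p + 1) (κ * (b - x))) x := by
  have h := (hasDerivAt_tiltedGaussMoment hp (κ * (b - x))).comp x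
    (((hasDerivAt_id x).const_sub b).const_mul κ)
  exact h.congr_deriv (by ring)

end

theorem stmt_4 (a ρ σ b : ℝ) (ha : 0 < a) (hρ : 0 < ρ) (hσ : 0 < σ)
    (κ : ℝ) (hκ : κ = Real.sqrt (2 * a) / σ)
    (η : ℝ → ℝ) (hη : ∀ t, η t = t ^ (ρ / a - 1) * Real.exp (-t ^ 2 / 2))
    (φ₂ : ℝ → ℝ)
    (hφ₂ : ∀ x, φ₂ x = ∫ t in Ioi (0 : ℝ), η t * Real.exp (κ * (b - x) * t)) :
    ∀ x : ℝ,
      ρ * φ₂ x - a * (b - x) * deriv φ₂ x - σ ^ 2 / 2 * deriv (deriv φ₂) x = 0 := by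
  intro x
  set p := ρ / a - 1 with hp_def
  have hp : -1 < p := by linarith [div_pos hρ ha]
  have hφ : φ₂ = fun y => tiltedGaussMoment p (κ * (b - y)) := by
    funext y
    simp only [hφ₂, hη, tiltedGaussMoment, tiltedGaussKernel]
  have hφ' : deriv φ₂ = fun y => -κ * tiltedGaussMoment (p + 1) (κ * (b - y)) :=
    hφ ▸ funext fun y => (hasDerivAt_tiltedGaussMoment_affine hp κ b y).deriv
  have hφ'' : deriv (deriv φ₂) x = κ ^ 2 * tiltedGaussMoment (p + 2) (κ * (b - x)) := by
    rw [hφ', ((hasDerivAt_tiltedGaussMoment_affine (by linarith) κ b x).const_mul (-κ)).deriv,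
      show p + 1 + 1 = p + 2 by ring]
    ring
  have hκσ : σ ^ 2 / 2 * κ ^ 2 = a := by
    rw [hκ, div_pow, sq_sqrt (by linarith)]
    field_simp
  have hρp : ρ = a * (p + 1) := by
    rw [hp_def]; field_simp; ring
  rw [hφ'', hφ', hφ, tiltedGaussMoment_add_two hp]
  linear_combination (tiltedGaussMoment p (κ * (b - x))) * hρp
    - ((p + 1) * tiltedGaussMoment p (κ * (b - x))
      + κ * (b - x) * tiltedGaussMoment (p + 1) (κ * (b - x))) * hκσ
end

section
/- For every x ∈ ℝ, the determinant of the 2×2 matrix Φ(x) with rows (φ₁(x), φ₂(x)) and (φ₁'(x), φ₂'(x)) equals -κ(∫₀^∞ η(t)e^{-κ(b-x)t}dt · ∫₀^∞ tη(t)e^{κ(b-x)t}dt + ∫₀^∞ tη(t)e^{-κ(b-x)t}dt · ∫₀^∞ η(t)e^{κ(b-x)t}dt), which is strictly negative; in particular Φ(x) is invertible for all x. -/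
open MeasureTheory Real Set

lemma aux_integrable (p c : ℝ) (hp : -1 < p) :
    IntegrableOn (fun t : ℝ => t ^ p * Real.exp (-t ^ 2 / 2) * Real.exp (c * t)) (Ioi 0) := by
  apply Integrable.mono'
    ((integrableOn_rpow_mul_exp_neg_mul_sq (by norm_num : (0:ℝ) < 1/4) hp).const_mul
      (Real.exp (c ^ 2)))
  · apply Measurable.aestronglyMeasurable
    fun_prop
  · filter_upwards [ae_restrict_mem measurableSet_Ioi] with t ht
    have ht' : (0:ℝ) ≤ t := le_of_lt ht
    have h1 : (0:ℝ) ≤ t ^ p := Real.rpow_nonneg ht' p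
    rw [Real.norm_eq_abs, abs_of_nonneg (by positivity)]
    have hexp : Real.exp (-t ^ 2 / 2) * Real.exp (c * t)
        ≤ Real.exp (c ^ 2) * Real.exp (-(1/4) * t ^ 2) := by
      rw [← Real.exp_add, ← Real.exp_add]
      apply Real.exp_le_exp.2
      nlinarith [sq_nonneg (c - t / 2)]
    calc t ^ p * Real.exp (-t ^ 2 / 2) * Real.exp (c * t)
        = t ^ p * (Real.exp (-t ^ 2 / 2) * Real.exp (c * t)) := by ring
      _ ≤ t ^ p * (Real.exp (c ^ 2) * Real.exp (-(1/4) * t ^ 2)) := by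
          exact mul_le_mul_of_nonneg_left hexp h1
      _ = Real.exp (c ^ 2) * (t ^ p * Real.exp (-(1/4) * t ^ 2)) := by ring

lemma aux_pos (p c : ℝ) (hp : -1 < p) :
    0 < ∫ t in Ioi (0:ℝ), t ^ p * Real.exp (-t ^ 2 / 2) * Real.exp (c * t) := by
  rw [setIntegral_pos_iff_support_of_nonneg_ae ?_ (aux_integrable p c hp)]
  · have hsub : Ioi (0:ℝ) ⊆
        Function.support (fun t : ℝ => t ^ p * Real.exp (-t ^ 2 / 2) * Real.exp (c * t)) ∩ Ioi 0 := by
      intro t ht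
      have ht' : (0:ℝ) < t := ht
      have : (0:ℝ) < t ^ p * Real.exp (-t ^ 2 / 2) * Real.exp (c * t) := by positivity
      exact ⟨ne_of_gt this, ht⟩
    calc (0:ENNReal) < volume (Ioi (0:ℝ)) := by simp [Real.volume_Ioi]
      _ ≤ _ := measure_mono hsub
  · filter_upwards [ae_restrict_mem measurableSet_Ioi] with t ht
    have ht' : (0:ℝ) < t := ht
    positivity

theorem stmt_5 (a ρ σ b : ℝ) (ha : 0 < a) (hρ : 0 < ρ) (hσ : 0 < σ)
    (κ : ℝ) (hκ : κ = Real.sqrt (2 * a) / σ)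
    (η : ℝ → ℝ) (hη : ∀ t, η t = t ^ (ρ / a - 1) * Real.exp (-t ^ 2 / 2))
    (φ₁ φ₂ φ₁' φ₂' : ℝ → ℝ)
    (hφ₁ : ∀ x, φ₁ x = ∫ t in Ioi (0 : ℝ), η t * Real.exp (-(κ * (b - x)) * t))
    (hφ₂ : ∀ x, φ₂ x = ∫ t in Ioi (0 : ℝ), η t * Real.exp (κ * (b - x) * t))
    (hφ₁' : ∀ x, φ₁' x = κ * ∫ t in Ioi (0 : ℝ), t * η t * Real.exp (-(κ * (b - x)) * t))
    (hφ₂' : ∀ x, φ₂' x = -κ * ∫ t in Ioi (0 : ℝ), t * η t * Real.exp (κ * (b - x) * t))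
    (hd₁ : ∀ x, HasDerivAt φ₁ (φ₁' x) x)
    (hd₂ : ∀ x, HasDerivAt φ₂ (φ₂' x) x)
    (Φ : ℝ → Matrix (Fin 2) (Fin 2) ℝ)
    (hΦ : ∀ x, Φ x = !![φ₁ x, φ₂ x; φ₁' x, φ₂' x]) :
    ∀ x : ℝ,
      (Φ x).det =
        -κ * ((∫ t in Ioi (0 : ℝ), η t * Real.exp (-(κ * (b - x)) * t)) *
                (∫ t in Ioi (0 : ℝ), t * η t * Real.exp (κ * (b - x) * t)) +
              (∫ t in Ioi (0 : ℝ), t * η t * Real.exp (-(κ * (b - x)) * t)) *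
                (∫ t in Ioi (0 : ℝ), η t * Real.exp (κ * (b - x) * t))) ∧
      (Φ x).det < 0 ∧ IsUnit (Φ x) := by
  intro x
  have hp : (-1:ℝ) < ρ / a - 1 := by
    have : 0 < ρ / a := div_pos hρ ha
    linarith
  have hκpos : 0 < κ := by
    rw [hκ]
    exact div_pos (Real.sqrt_pos.2 (by linarith)) hσ
  -- positivity of the four integrals
  have key1 : ∀ c : ℝ, 0 < ∫ t in Ioi (0:ℝ), η t * Real.exp (c * t) := by
    intro c
    have := aux_pos (ρ / a - 1) c hp
    refine lt_of_lt_of_eq this (setIntegral_congr_fun measurableSet_Ioi ?_)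
    intro t _
    simp only [hη]
  have key2 : ∀ c : ℝ, 0 < ∫ t in Ioi (0:ℝ), t * η t * Real.exp (c * t) := by
    intro c
    have := aux_pos (ρ / a - 1 + 1) c (by linarith)
    refine lt_of_lt_of_eq this (setIntegral_congr_fun measurableSet_Ioi ?_)
    intro t ht
    have ht' : (0:ℝ) < t := ht
    simp only [hη, Real.rpow_add ht', Real.rpow_one]
    ring
  have hdet : (Φ x).det =
      -κ * ((∫ t in Ioi (0 : ℝ), η t * Real.exp (-(κ * (b - x)) * t)) *
              (∫ t in Ioi (0 : ℝ), t * η t * Real.exp (κ * (b - x) * t)) +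
            (∫ t in Ioi (0 : ℝ), t * η t * Real.exp (-(κ * (b - x)) * t)) *
              (∫ t in Ioi (0 : ℝ), η t * Real.exp (κ * (b - x) * t))) := by
    rw [hΦ, Matrix.det_fin_two_of, hφ₁, hφ₂, hφ₁', hφ₂']
    ring
  have hlt : (Φ x).det < 0 := by
    rw [hdet]
    have h1 := key1 (-(κ * (b - x)))
    have h2 := key1 (κ * (b - x))
    have h3 := key2 (-(κ * (b - x)))
    have h4 := key2 (κ * (b - x))
    have hS := add_pos (mul_pos h1 h4) (mul_pos h3 h2)
    nlinarith [mul_pos hκpos hS]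
  exact ⟨hdet, hlt, (Matrix.isUnit_iff_isUnit_det _).2 (isUnit_iff_ne_zero.2 (ne_of_lt hlt))⟩
end
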